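/- The classical Laguerre functions ℓ_n^α(t) = e^{-t} L_n^α(2t) satisfy the raising relation t·ℓ''_n(t) - (2t-ν)·ℓ'_n(t) + (t-ν)·ℓ_n(t) = -2(n+1)·ℓ_{n+1}^α(t), where ν = α+1. -/

import Mathlib

open Finset

/-- The generalized Laguerre polynomial `L_n^α(t) = ∑_{k=0}^n (-1)^k binom(n+α, n-k) t^k / k!`,
where `binom(n+α, n-k) = ∏_{i=1}^{n-k} (α+k+i)/i`. It is the polynomial solution of
`t y'' + (α+1-t) y' + n y = 0`. -/
noncomputable def genLaguerre (n : ℕ) (α : ℝ) (t : ℝ) : ℝ :=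
  ∑ k ∈ range (n + 1),
    ((-1 : ℝ) ^ k / (Nat.factorial k)) *
      (∏ i ∈ range (n - k), (α + k + 1 + i) / (i + 1)) * t ^ k

/-- The Laguerre function `ℓ_n^α(t) = e^{-t} L_n^α(2t)`. -/
noncomputable def laguerreFun (n : ℕ) (α : ℝ) (t : ℝ) : ℝ :=
  Real.exp (-t) * genLaguerre n α (2 * t)

open Polynomial
noncomputable def lagP (m : ℕ) (a : ℝ) : ℝ := ∏ i ∈ range m, (a + i)

lemma lagP_succ_right (m : ℕ) (a : ℝ) : lagP (m+1) a = lagP m a * (a + m) := by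
  simp [lagP, prod_range_succ]

lemma lagP_succ_left (m : ℕ) (a : ℝ) : lagP (m+1) a = a * lagP m (a+1) := by
  rw [lagP, prod_range_succ', lagP, mul_comm]
  congr 1
  · simp
  · apply Finset.prod_congr rfl
    intro i _
    push_cast
    ring

noncomputable def lagC (α : ℝ) (n k : ℕ) : ℝ :=
  if k ≤ n then (-1:ℝ)^k / (Nat.factorial k) * lagP (n-k) (α+k+1) / (Nat.factorial (n-k)) else 0

lemma fact_ne (k : ℕ) : ((Nat.factorial k : ℝ)) ≠ 0 := by
  exact_mod_cast Nat.factorial_ne_zero k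

lemma keyA0 (α : ℝ) (n : ℕ) :
    (α+1) * lagC α n 1 - (α+1) * lagC α n 0 + ((n:ℝ)+1) * lagC α (n+1) 0 = 0 := by
  rcases n with _ | j
  · simp only [lagC]
    norm_num [lagP]
  · simp only [lagC]
    have h1 : (1:ℕ) ≤ j + 1 := Nat.le_add_left 1 j
    rw [if_pos h1, if_pos (Nat.zero_le _), if_pos (Nat.zero_le _)]
    simp only [Nat.succ_sub_one, Nat.sub_zero]
    push_cast
    norm_num
    have e0 : lagP (j+1) (α+1) = (α+1) * lagP j (α+1+1) := lagP_succ_left j (α+1)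
    have e1 : lagP (j+2) (α+1) = (α+1) * (lagP j (α+1+1) * (α+1+1+j)) := by
      have := lagP_succ_left (j+1) (α+1)
      rw [show j+2 = j+1+1 from rfl, this, lagP_succ_right j (α+1+1)]
    rw [show j+1+1 = j+2 from rfl] at *
    rw [e0, e1]
    have hf1 : (Nat.factorial (j+1) : ℝ) = (j+1) * Nat.factorial j := by
      push_cast [Nat.factorial_succ]; ring
    have hf2 : (Nat.factorial (j+2) : ℝ) = (j+2) * ((j+1) * Nat.factorial j) := by
      rw [Nat.factorial_succ]; push_cast [hf1]; ring
    rw [hf1, hf2]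
    have := fact_ne j
    field_simp
    ring

lemma keyAs (α : ℝ) (n m : ℕ) :
    ((m:ℝ)+2)*((m:ℝ)+α+2) * lagC α n (m+2) - (2*(m:ℝ)+α+3) * lagC α n (m+1)
      + lagC α n m + ((n:ℝ)+1) * lagC α (n+1) (m+1) = 0 := by
  have hfs : ∀ k : ℕ, (Nat.factorial (k+1) : ℝ) = (k+1) * Nat.factorial k := by
    intro k; push_cast [Nat.factorial_succ]; ring
  rcases Nat.lt_or_ge n (m+2) with hlt | hge
  · have h3 : ¬ (m+2 ≤ n) := by omega
    have hcase : n < m ∨ n = m ∨ n = m + 1 := by omega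
    rcases hcase with h | rfl | rfl
    · have h1 : ¬ (m ≤ n) := by omega
      have h2 : ¬ (m+1 ≤ n) := by omega
      have h4 : ¬ (m+1 ≤ n+1) := by omega
      simp [lagC, h1, h2, h3, h4]
    · -- n = m
      have h2 : ¬ (n+1 ≤ n) := by omega
      rw [lagC, if_neg h3, lagC, if_neg h2, lagC, if_pos le_rfl, lagC, if_pos le_rfl]
      simp only [Nat.sub_self]
      simp only [lagP, range_zero, prod_empty, Nat.factorial_zero]
      rw [hfs n]
      have := fact_ne n
      field_simp
      ring
    · -- n = m+1
      have h2 : (m+1 ≤ m+1) := le_rfl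
      rw [lagC, if_neg h3, lagC, if_pos h2, lagC, if_pos (by omega : m ≤ m+1),
        lagC, if_pos (by omega : m+1 ≤ m+1+1)]
      rw [Nat.sub_self, show m+1-m = 1 from by omega, show m+1+1-(m+1) = 1 from by omega]
      simp only [lagP, range_one, prod_singleton, prod_empty, range_zero, Nat.factorial_zero, Nat.factorial_one]
      rw [hfs m]
      have := fact_ne m
      push_cast
      field_simp
      ring
  · -- generic case : n = m + 2 + j
    obtain ⟨j, rfl⟩ : ∃ j, n = m + 2 + j := ⟨n - (m+2), by omega⟩
    rw [lagC, if_pos (by omega : m+2 ≤ m+2+j), lagC, if_pos (by omega : m+1 ≤ m+2+j),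
      lagC, if_pos (by omega : m ≤ m+2+j), lagC, if_pos (by omega : m+1 ≤ m+2+j+1)]
    rw [show m+2+j-(m+2) = j from by omega, show m+2+j-(m+1) = j+1 from by omega,
      show m+2+j-m = j+2 from by omega, show m+2+j+1-(m+1) = j+2 from by omega]
    have E1 : lagP (j+1) (α+((m+1:ℕ):ℝ)+1) = (α+((m+1:ℕ):ℝ)+1) * lagP j (α+((m+2:ℕ):ℝ)+1) := by
      rw [lagP_succ_left, show (α+((m+1:ℕ):ℝ)+1)+1 = α+((m+2:ℕ):ℝ)+1 from by push_cast; ring]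
    have E2 : lagP (j+2) (α+(m:ℝ)+1)
        = (α+(m:ℝ)+1) * ((α+((m+1:ℕ):ℝ)+1) * lagP j (α+((m+2:ℕ):ℝ)+1)) := by
      rw [show j+2 = j+1+1 from rfl, lagP_succ_left,
        show (α+(m:ℝ)+1)+1 = α+((m+1:ℕ):ℝ)+1 from by push_cast; ring, E1]
    have E3 : lagP (j+2) (α+((m+1:ℕ):ℝ)+1)
        = (α+((m+1:ℕ):ℝ)+1) * (lagP j (α+((m+2:ℕ):ℝ)+1) * (α+((m+2:ℕ):ℝ)+1+j)) := by
      rw [show j+2 = j+1+1 from rfl, lagP_succ_left,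
        show (α+((m+1:ℕ):ℝ)+1)+1 = α+((m+2:ℕ):ℝ)+1 from by push_cast; ring, lagP_succ_right]
    rw [E1, E2, E3]
    rw [show m+2 = m+1+1 from rfl, hfs (m+1), hfs m, show j+2 = j+1+1 from rfl, hfs (j+1), hfs j]
    have h1 := fact_ne m
    have h2 := fact_ne j
    push_cast
    field_simp
    ring

noncomputable def lagPoly (n : ℕ) (α : ℝ) : Polynomial ℝ :=
  ∑ k ∈ range (n+1), Polynomial.C (lagC α n k) * Polynomial.X ^ k

lemma lagPoly_coeff (n : ℕ) (α : ℝ) (m : ℕ) : (lagPoly n α).coeff m = lagC α n m := by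
  rw [lagPoly, finset_sum_coeff]
  simp only [coeff_C_mul, coeff_X_pow, mul_ite, mul_one, mul_zero]
  rw [Finset.sum_ite_eq (range (n+1)) m]
  split
  · rfl
  · rename_i hm
    rw [Finset.mem_range] at hm
    rw [lagC, if_neg (by omega)]

lemma keyPoly (n : ℕ) (α : ℝ) :
    Polynomial.X * derivative (derivative (lagPoly n α))
      + Polynomial.C (α+1) * derivative (lagPoly n α)
      - Polynomial.C 2 * (Polynomial.X * derivative (lagPoly n α))
      + Polynomial.X * lagPoly n α - Polynomial.C (α+1) * lagPoly n α
      + Polynomial.C ((n:ℝ)+1) * lagPoly (n+1) α = 0 := by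
  ext m
  rcases m with _ | m
  · simp only [coeff_add, coeff_sub, coeff_C_mul, coeff_X_mul_zero, coeff_derivative,
      lagPoly_coeff, coeff_zero]
    push_cast
    linear_combination keyA0 α n
  · simp only [coeff_add, coeff_sub, coeff_C_mul, coeff_X_mul, coeff_derivative,
      lagPoly_coeff, coeff_zero]
    push_cast
    linear_combination keyAs α n m

lemma prodfact (m : ℕ) : ∏ i ∈ range m, ((i:ℝ)+1) = (Nat.factorial m : ℝ) := by
  induction m with
  | zero => simp
  | succ k ih => rw [prod_range_succ, ih, Nat.factorial_succ]; push_cast; ring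

lemma genLaguerre_eq_eval (n : ℕ) (α t : ℝ) : genLaguerre n α t = (lagPoly n α).eval t := by
  rw [genLaguerre, lagPoly, eval_finset_sum]
  apply Finset.sum_congr rfl
  intro k hk
  rw [Finset.mem_range] at hk
  rw [eval_mul, eval_pow, eval_C, eval_X, lagC, if_pos (by omega : k ≤ n)]
  congr 1
  rw [prod_div_distrib, prodfact, lagP]
  ring

lemma hasDerivAt_expPoly (P : Polynomial ℝ) (t : ℝ) :
    HasDerivAt (fun t => Real.exp (-t) * P.eval (2*t))
      (Real.exp (-t) * (Polynomial.C 2 * derivative P - P).eval (2*t)) t := by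
  have h1 : HasDerivAt (fun t : ℝ => Real.exp (-t)) (-Real.exp (-t)) t := by
    simpa [Function.comp_def] using (Real.hasDerivAt_exp (-t)).comp t (hasDerivAt_neg t)
  have h2 : HasDerivAt (fun t : ℝ => P.eval (2*t)) ((derivative P).eval (2*t) * 2) t := by
    simpa [Function.comp_def, mul_comm] using (P.hasDerivAt (2*t)).comp t ((hasDerivAt_id t).const_mul 2)
  have h := h1.mul h2
  refine h.congr_deriv ?_
  simp only [eval_sub, eval_mul, eval_C]
  ring

lemma laguerreFun_eq (n : ℕ) (α : ℝ) :
    laguerreFun n α = fun t => Real.exp (-t) * (lagPoly n α).eval (2*t) := by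
  funext t
  rw [laguerreFun, genLaguerre_eq_eval]

lemma deriv_expPoly (P : Polynomial ℝ) :
    deriv (fun t => Real.exp (-t) * P.eval (2*t))
      = fun t => Real.exp (-t) * (Polynomial.C 2 * derivative P - P).eval (2*t) := by
  funext t
  exact (hasDerivAt_expPoly P t).deriv

theorem laguerreFun_raising (n : ℕ) (α ν : ℝ) (hν : ν = α + 1) (t : ℝ) :
    t * deriv (deriv (laguerreFun n α)) t - (2 * t - ν) * deriv (laguerreFun n α) t +
      (t - ν) * laguerreFun n α t = -2 * (n + 1) * laguerreFun (n + 1) α t := by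
  subst hν
  set L := lagPoly n α with hL
  have h1 : deriv (laguerreFun n α) = fun t => Real.exp (-t)
      * (Polynomial.C 2 * derivative L - L).eval (2*t) := by
    rw [laguerreFun_eq, deriv_expPoly]
  have h2 : deriv (deriv (laguerreFun n α)) = fun t => Real.exp (-t)
      * (Polynomial.C 2 * derivative (Polynomial.C 2 * derivative L - L)
          - (Polynomial.C 2 * derivative L - L)).eval (2*t) := by
    rw [h1, deriv_expPoly]
  have hk := congrArg (Polynomial.eval (2*t)) (keyPoly n α)
  simp only [eval_add, eval_sub, eval_mul, eval_C, eval_X, eval_zero] at hk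
  rw [h2, h1, laguerreFun_eq, laguerreFun_eq]
  simp only [derivative_sub, derivative_mul, derivative_C, zero_mul, zero_add,
    eval_add, eval_sub, eval_mul, eval_C, eval_X]
  linear_combination (2 * Real.exp (-t)) * hk
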